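/- If f₁(r) = c₁(r+2)³/r² + c₂(r³+10r²+40r)/(r+2)² with (c₁,c₂) ≠ (0,0), then ∫₀^∞ (f₁'(r))² r² dr = ∞; in particular no nonzero solution of this form has finite Ḣ¹ norm on (0,∞) with measure r² dr. -/

import Mathlib

/-!
Near `0` the `c₁`-part dominates: `r³ f₁'(r) → -16 c₁`, so `f₁'(r)² r² ≳ c₁² r⁻⁴`.
If `c₁ = 0`, then `|f₁'| = |c₂| (r³ + 6r² + 80)/(r + 2)³ ≥ |c₂|/2` on `(0, ∞)`, so
`f₁'(r)² r² ≳ c₂² r²`. Either way the integrand dominates a positive multiple of `r⁻¹` on an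
interval where `r⁻¹` is not integrable (`(0, ε)`, resp. `(1, ∞)`).
-/

open MeasureTheory

noncomputable section

def f₁ (c₁ c₂ : ℝ) (r : ℝ) : ℝ :=
  c₁ * (r + 2) ^ 3 / r ^ 2 + c₂ * (r ^ 3 + 10 * r ^ 2 + 40 * r) / (r + 2) ^ 2

open Filter Topology Set

theorem not_integrableOn_Ioo_zero_inv {ε : ℝ} (hε : 0 < ε) :
    ¬ IntegrableOn (·⁻¹) (Ioo 0 ε) := by
  rw [← integrableOn_Ioc_iff_integrableOn_Ioo,
    ← intervalIntegrable_iff_integrableOn_Ioc_of_le hε.le, intervalIntegrable_inv_iff]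
  simp [hε.ne]

theorem setLIntegral_ofReal_inv_eq_top {s : Set ℝ} (hs : MeasurableSet s) (hs_pos : s ⊆ Ioi 0)
    (hinv : ¬ IntegrableOn (·⁻¹) s) : ∫⁻ x in s, ENNReal.ofReal x⁻¹ = ⊤ := by
  by_contra hfin
  refine hinv ((lintegral_ofReal_ne_top_iff_integrable measurable_inv.aestronglyMeasurable ?_).1 hfin)
  exact (ae_restrict_iff' hs).2 (ae_of_all _ fun x hx => inv_nonneg.2 (hs_pos hx).le)

theorem setLIntegral_ofReal_eq_top_of_const_mul_inv_le {s : Set ℝ} {g : ℝ → ℝ} {c : ℝ}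
    (hs : MeasurableSet s) (hs_pos : s ⊆ Ioi 0) (hinv : ¬ IntegrableOn (·⁻¹) s) (hc : 0 < c)
    (hg : ∀ x ∈ s, c * x⁻¹ ≤ g x) : ∫⁻ x in s, ENNReal.ofReal (g x) = ⊤ := by
  refine eq_top_mono (setLIntegral_mono' hs fun x hx => ENNReal.ofReal_le_ofReal (hg x hx)) ?_
  simp_rw [ENNReal.ofReal_mul hc.le]
  rw [lintegral_const_mul _ measurable_inv.ennreal_ofReal,
    setLIntegral_ofReal_inv_eq_top hs hs_pos hinv, ENNReal.mul_top (by simpa)]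

theorem hasDerivAt_f₁ (c₁ c₂ : ℝ) {r : ℝ} (hr : 0 < r) :
    HasDerivAt (f₁ c₁ c₂)
      (c₁ * ((r + 2) ^ 2 * (r - 4)) / r ^ 3 + c₂ * (r ^ 3 + 6 * r ^ 2 + 80) / (r + 2) ^ 3) r := by
  have hx := hasDerivAt_id' r
  have hx2 := hx.add_const 2
  have h := (((hx2.fun_pow 3).const_mul c₁).fun_div (hx.fun_pow 2) (by positivity)).add
    (((((hx.fun_pow 3).fun_add ((hx.fun_pow 2).const_mul 10)).fun_add (hx.const_mul 40)).const_mul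
      c₂).fun_div (hx2.fun_pow 2) (by positivity))
  refine h.congr_deriv ?_
  field_simp
  ring

theorem deriv_f₁ (c₁ c₂ : ℝ) {r : ℝ} (hr : 0 < r) :
    deriv (f₁ c₁ c₂) r
      = c₁ * ((r + 2) ^ 2 * (r - 4)) / r ^ 3 + c₂ * (r ^ 3 + 6 * r ^ 2 + 80) / (r + 2) ^ 3 :=
  (hasDerivAt_f₁ c₁ c₂ hr).deriv

theorem tendsto_deriv_f₁_mul_pow_three (c₁ c₂ : ℝ) :
    Tendsto (fun r => deriv (f₁ c₁ c₂) r * r ^ 3) (𝓝[>] 0) (𝓝 (-16 * c₁)) := by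
  have hcont : ContinuousAt (fun r : ℝ => c₁ * ((r + 2) ^ 2 * (r - 4))
      + c₂ * r ^ 3 * (r ^ 3 + 6 * r ^ 2 + 80) / (r + 2) ^ 3) 0 := by
    fun_prop (disch := norm_num)
  convert (hcont.tendsto.mono_left (nhdsWithin_le_nhds (s := Ioi 0))).congr' ?_ using 2
  · ring
  filter_upwards [self_mem_nhdsWithin] with r (hr : 0 < r)
  rw [deriv_f₁ c₁ c₂ hr]
  field_simp

theorem eventually_inv_le_sq_deriv_f₁_mul_sq {c₁ : ℝ} (c₂ : ℝ) (hc₁ : c₁ ≠ 0) :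
    ∀ᶠ r in 𝓝[>] 0, 64 * c₁ ^ 2 * r⁻¹ ≤ deriv (f₁ c₁ c₂) r ^ 2 * r ^ 2 := by
  have hbig : ∀ᶠ r in 𝓝[>] 0, 64 * c₁ ^ 2 < (deriv (f₁ c₁ c₂) r * r ^ 3) ^ 2 :=
    ((tendsto_deriv_f₁_mul_pow_three c₁ c₂).pow 2).eventually
      (lt_mem_nhds (by nlinarith [pow_pos (abs_pos.2 hc₁) 2, sq_abs c₁]))
  filter_upwards [hbig, Ioo_mem_nhdsGT one_pos] with r hr ⟨hr0, hr1⟩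
  calc 64 * c₁ ^ 2 * r⁻¹ ≤ 64 * c₁ ^ 2 * r⁻¹ ^ 4 := by
        gcongr
        exact le_self_pow₀ ((one_le_inv₀ hr0).2 hr1.le) (by norm_num)
    _ ≤ (deriv (f₁ c₁ c₂) r * r ^ 3) ^ 2 * r⁻¹ ^ 4 := by gcongr
    _ = deriv (f₁ c₁ c₂) r ^ 2 * r ^ 2 := by field_simp

theorem sq_le_four_mul_sq_deriv_f₁_zero (c₂ : ℝ) {r : ℝ} (hr : 0 < r) :
    c₂ ^ 2 ≤ 4 * deriv (f₁ 0 c₂) r ^ 2 := by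
  set q := (r ^ 3 + 6 * r ^ 2 + 80) / (r + 2) ^ 3 with hq_def
  have hq : 1 ≤ 2 * q := by
    rw [hq_def, mul_div_assoc', le_div_iff₀ (by positivity)]
    nlinarith [sq_nonneg (r - 2), mul_pos hr hr]
  rw [deriv_f₁ 0 c₂ hr, zero_mul, zero_div, zero_add, mul_div_assoc, ← hq_def]
  nlinarith [mul_le_mul_of_nonneg_left (one_le_pow₀ hq : 1 ≤ (2 * q) ^ 2) (sq_nonneg c₂)]

theorem inv_le_sq_deriv_f₁_zero_mul_sq (c₂ : ℝ) {r : ℝ} (hr : 1 < r) :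
    c₂ ^ 2 / 4 * r⁻¹ ≤ deriv (f₁ 0 c₂) r ^ 2 * r ^ 2 := by
  have hderiv := sq_le_four_mul_sq_deriv_f₁_zero c₂ (zero_lt_one.trans hr)
  calc c₂ ^ 2 / 4 * r⁻¹ ≤ c₂ ^ 2 / 4 * 1 := by gcongr; exact inv_le_one_of_one_le₀ hr.le
    _ ≤ deriv (f₁ 0 c₂) r ^ 2 * 1 := by linarith
    _ ≤ deriv (f₁ 0 c₂) r ^ 2 * r ^ 2 := by gcongr; nlinarith

/-- No nonzero solution of the `j = 1` radial linearized equation has finite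
`Ḣ¹((0,∞), r²dr)` seminorm. -/
theorem stmt_11 (c₁ c₂ : ℝ) (h : (c₁, c₂) ≠ (0, 0)) :
    ∫⁻ r in Set.Ioi (0 : ℝ), ENNReal.ofReal ((deriv (f₁ c₁ c₂) r) ^ 2 * r ^ 2) = ⊤ := by
  rcases eq_or_ne c₁ 0 with rfl | hc₁
  · have hc₂ : c₂ ≠ 0 := by rintro rfl; exact h rfl
    refine eq_top_mono (lintegral_mono_set (Ioi_subset_Ioi zero_le_one)) ?_
    exact setLIntegral_ofReal_eq_top_of_const_mul_inv_le measurableSet_Ioi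
      (Ioi_subset_Ioi zero_le_one) not_integrableOn_Ioi_inv (by positivity)
      fun r hr => inv_le_sq_deriv_f₁_zero_mul_sq c₂ hr
  · obtain ⟨ε, hε, hbound⟩ :=
      mem_nhdsGT_iff_exists_Ioo_subset.1 (eventually_inv_le_sq_deriv_f₁_mul_sq c₂ hc₁)
    refine eq_top_mono (lintegral_mono_set fun x (hx : x ∈ Ioo 0 ε) => hx.1) ?_
    exact setLIntegral_ofReal_eq_top_of_const_mul_inv_le measurableSet_Ioo (fun x hx => hx.1)
      (not_integrableOn_Ioo_zero_inv hε) (by positivity) hbound
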